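/- arXiv:math/0504486 — 2 statements merged into one kernel-verified Lean document; each statement's English description precedes it below -/
import Mathlib

section
/- Let P ⊆ ℝ^d be a reflexive lattice polytope, and let f : ℤ → ℚ be a polynomial function such that f(m) = #(mP ∩ ℤ^d) for all integers m ≥ 0 and f(−m) = (−1)^d · #(interior(mP) ∩ ℤ^d) for all integers m ≥ 1 (Ehrhart reciprocity). Then f(m−1) = (−1)^d · f(−m) for every integer m. -/
/-!
Bipolarity turns `polar P = conv T` into the facet description `P = {x | ⟪t, x⟫ ≤ 1 for t ∈ T}`,
so that `c • P = {x | ⟪t, x⟫ ≤ c}` and `interior (c • P) = {x | ⟪t, x⟫ < c}` for `c > 0`.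
For a lattice point `v` the values `⟪t, v⟫` are integers, hence `v ∈ interior ((n + 1) • P)` iff
`v ∈ n • P`. This gives `f n = (-1)^d f (-(n + 1))` for all `n ≥ 0`, and a polynomial identity
holding at infinitely many points holds everywhere.
-/
open Pointwise Polynomial

variable {ι : Type*} [Fintype ι]

/-- Polar with respect to the dot product; Mathlib's `LinearMap.polar` bounds `‖B x y‖` instead. -/
def dotPolar (s : Set (ι → ℝ)) : Set (ι → ℝ) := {y | ∀ x ∈ s, x ⬝ᵥ y ≤ 1}

lemma dotPolar_convexHull (s : Set (ι → ℝ)) : dotPolar (convexHull ℝ s) = dotPolar s := by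
  refine Set.Subset.antisymm (fun y hy x hx => hy x (subset_convexHull ℝ s hx)) fun y hy => ?_
  exact convexHull_min hy (convex_halfSpace_le (dotProductBilin ℝ ℝ |>.flip y).isLinear 1)

lemma ContinuousLinearMap.apply_eq_dotProduct [DecidableEq ι] (g : (ι → ℝ) →L[ℝ] ℝ)
    (z : ι → ℝ) : g z = z ⬝ᵥ fun i => g (Pi.single i 1) := by
  conv_lhs => rw [← Finset.univ_sum_single z]
  simp only [map_sum, dotProduct]
  refine Finset.sum_congr rfl fun i _ => ?_
  rw [← smul_eq_mul, ← map_smul, ← Pi.single_smul', smul_eq_mul, mul_one]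

lemma dotPolar_dotPolar {P : Set (ι → ℝ)} (hconv : Convex ℝ P) (hclosed : IsClosed P)
    (h0 : 0 ∈ P) : dotPolar (dotPolar P) = P := by
  classical
  refine Set.Subset.antisymm (fun x hx => ?_) fun x hx y hy => dotProduct_comm y x ▸ hy x hx
  by_contra hxP
  obtain ⟨g, u, hgu, hux⟩ := geometric_hahn_banach_closed_point hconv hclosed hxP
  have hu : 0 < u := by simpa using hgu 0 h0
  set y : ι → ℝ := u⁻¹ • fun i => g (Pi.single i 1)
  have hgy (z : ι → ℝ) : z ⬝ᵥ y = u⁻¹ * g z := by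
    rw [dotProduct_smul, g.apply_eq_dotProduct z, smul_eq_mul]
  have hy : y ∈ dotPolar P := fun z hz => by
    rw [hgy, inv_mul_le_one₀ hu]; exact (hgu z hz).le
  have := hx y hy
  rw [dotProduct_comm, hgy, inv_mul_le_one₀ hu] at this
  linarith

lemma setOf_forall_dotProduct_nonpos_eq_singleton_zero {s : Set (ι → ℝ)}
    (hbdd : Bornology.IsBounded (dotPolar s)) : {x | ∀ t ∈ s, t ⬝ᵥ x ≤ 0} = {0} := by
  refine Set.Subset.antisymm (fun x hx => ?_) (by simp)
  obtain ⟨C, hC⟩ := isBounded_iff_forall_norm_le.mp hbdd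
  have hC0 : 0 ≤ C := by simpa using hC 0 fun t _ => by simp
  by_contra hx0
  have hxpos : 0 < ‖x‖ := norm_pos_iff.mpr hx0
  have hr : 0 ≤ (C + 1) / ‖x‖ := by positivity
  have hray : ((C + 1) / ‖x‖) • x ∈ dotPolar s := fun t ht => by
    rw [dotProduct_smul, smul_eq_mul]
    nlinarith [hx t ht]
  have := hC _ hray
  rw [norm_smul, Real.norm_of_nonneg hr, div_mul_cancel₀ _ hxpos.ne'] at this
  linarith

lemma smul_dotPolar (s : Set (ι → ℝ)) {c : ℝ} (hc : 0 < c) :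
    c • dotPolar s = {x | ∀ t ∈ s, t ⬝ᵥ x ≤ c} := by
  ext x
  simp only [Set.mem_smul_set_iff_inv_smul_mem₀ hc.ne', dotPolar, Set.mem_ofPred_eq,
    dotProduct_smul, smul_eq_mul, inv_mul_le_one₀ hc]

lemma smul_dotPolar_of_isBounded {s : Set (ι → ℝ)} (hbdd : Bornology.IsBounded (dotPolar s))
    {c : ℝ} (hc : 0 ≤ c) : c • dotPolar s = {x | ∀ t ∈ s, t ⬝ᵥ x ≤ c} := by
  rcases hc.eq_or_lt with rfl | hc
  · rw [Set.zero_smul_set ⟨0, fun t _ => by simp⟩, setOf_forall_dotProduct_nonpos_eq_singleton_zero hbdd]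
    rfl
  · exact smul_dotPolar s hc

lemma interior_setOf_dotProduct_le (t : ι → ℝ) {c : ℝ} (hc : 0 < c) :
    interior {x | t ⬝ᵥ x ≤ c} = {x | t ⬝ᵥ x < c} := by
  rcases eq_or_ne t 0 with rfl | ht
  · simp [hc.le, hc]
  let φ := dotProductBilin ℝ ℝ t
  have hφ : Function.Surjective φ := by
    obtain ⟨i, hi⟩ := Function.ne_iff.mp ht
    classical
    refine fun a => ⟨Pi.single i (a / t i), ?_⟩
    simp [φ, dotProduct_single, mul_div_cancel₀ _ hi]
  have := (φ.isOpenMap_of_finiteDimensional hφ).preimage_interior_eq_interior_preimage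
    (LinearMap.continuous_of_finiteDimensional φ) (Set.Iic c)
  rw [interior_Iic] at this
  exact this.symm

lemma interior_setOf_forall_dotProduct_le {s : Set (ι → ℝ)} (hs : s.Finite) {c : ℝ}
    (hc : 0 < c) : interior {x | ∀ t ∈ s, t ⬝ᵥ x ≤ c} = {x | ∀ t ∈ s, t ⬝ᵥ x < c} := by
  have hinter : {x | ∀ t ∈ s, t ⬝ᵥ x ≤ c} = ⋂ t ∈ s, {x | t ⬝ᵥ x ≤ c} := by ext; simp
  rw [hinter, hs.interior_biInter]
  simp_rw [interior_setOf_dotProduct_le _ hc]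
  ext; simp

lemma latticePoints_smul_dotPolar_eq_interior (T : Finset (ι → ℤ))
    (hbdd : Bornology.IsBounded (dotPolar ((fun v : ι → ℤ => fun i => (v i : ℝ)) '' T)))
    (n : ℕ) :
    {v : ι → ℤ | (fun i => (v i : ℝ)) ∈
        (n : ℝ) • dotPolar ((fun v : ι → ℤ => fun i => (v i : ℝ)) '' T)} =
      {v : ι → ℤ | (fun i => (v i : ℝ)) ∈
        interior (((n + 1 : ℕ) : ℝ) • dotPolar ((fun v : ι → ℤ => fun i => (v i : ℝ)) '' T))} := by
  have hpos : (0 : ℝ) < (n + 1 : ℕ) := by positivity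
  ext v
  rw [Set.mem_ofPred_eq, Set.mem_ofPred_eq, smul_dotPolar_of_isBounded hbdd n.cast_nonneg,
    smul_dotPolar _ hpos, interior_setOf_forall_dotProduct_le (T.finite_toSet.image _) hpos]
  simp only [Set.mem_ofPred_eq, Set.forall_mem_image]
  refine forall₂_congr fun t _ => ?_
  have hcast : (fun i => (t i : ℝ)) ⬝ᵥ (fun i => (v i : ℝ)) = ((t ⬝ᵥ v : ℤ) : ℝ) :=
    ((Int.castRingHom ℝ).map_dotProduct t v).symm
  rw [hcast]
  push_cast
  exact_mod_cast Int.lt_add_one_iff.symm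

lemma Polynomial.eq_of_forall_eval_natCast_eq {R : Type*} [CommRing R] [IsDomain R] [CharZero R]
    {p q : R[X]} (h : ∀ n : ℕ, p.eval (n : R) = q.eval (n : R)) : p = q :=
  eq_of_infinite_eval_eq p q (Set.infinite_of_injective_forall_mem Nat.cast_injective h)

/-- Let `P ⊆ ℝ^d` be a reflexive lattice polytope, and let `f : ℤ → ℚ` be a
polynomial function with `f m = #(mP ∩ ℤ^d)` for `m ≥ 0` and
`f (-m) = (-1)^d * #(interior(mP) ∩ ℤ^d)` for `m ≥ 1` (Ehrhart reciprocity).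
Then `f (m - 1) = (-1)^d * f (-m)` for every integer `m`. -/
theorem stmt_3 (d : ℕ) (S : Finset (Fin d → ℤ)) (P : Set (Fin d → ℝ))
    (hP : P = convexHull ℝ ((fun v : Fin d → ℤ => fun i => (v i : ℝ)) '' S))
    (h0 : (0 : Fin d → ℝ) ∈ interior P)
    (T : Finset (Fin d → ℤ))
    (hpolar : {y : Fin d → ℝ | ∀ x ∈ P, ∑ i, x i * y i ≤ 1} =
      convexHull ℝ ((fun v : Fin d → ℤ => fun i => (v i : ℝ)) '' T))
    (f : ℤ → ℚ) (p : Polynomial ℚ) (hpoly : ∀ m : ℤ, f m = p.eval (m : ℚ))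
    (hf : ∀ m : ℕ,
      f (m : ℤ) = (Set.ncard {v : Fin d → ℤ | (fun i => (v i : ℝ)) ∈ (m : ℝ) • P} : ℚ))
    (hrec : ∀ m : ℕ, 1 ≤ m →
      f (-(m : ℤ)) = (-1 : ℚ) ^ d *
        (Set.ncard {v : Fin d → ℤ | (fun i => (v i : ℝ)) ∈ interior ((m : ℝ) • P)} : ℚ)) :
    ∀ m : ℤ, f (m - 1) = (-1 : ℚ) ^ d * f (-m) := by
  have hPcpt : IsCompact P := hP ▸ (S.finite_toSet.image _).isCompact_convexHull ℝ
  have hfacets : P = dotPolar ((fun v : Fin d → ℤ => fun i => (v i : ℝ)) '' T) := by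
    rw [← dotPolar_convexHull, ← hpolar]
    exact (dotPolar_dotPolar (hP ▸ convex_convexHull ℝ _) hPcpt.isClosed
      (interior_subset h0)).symm
  have hshift (n : ℕ) : f n = (-1) ^ d * f (-(n + 1 : ℕ)) := by
    rw [hrec (n + 1) n.succ_pos, hf n, hfacets,
      latticePoints_smul_dotPolar_eq_interior T (hfacets ▸ hPcpt.isBounded), ← mul_assoc,
      ← mul_pow, neg_one_mul, neg_neg, one_pow, one_mul]
  have hp : p = C ((-1) ^ d) * p.comp (-X - 1) :=
    eq_of_forall_eval_natCast_eq fun n => by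
      have h := hshift n
      rw [hpoly, hpoly] at h
      push_cast at h
      simp only [eval_mul, eval_C, eval_comp, eval_sub, eval_neg, eval_X, eval_one]
      rw [h, neg_add']
  intro m
  rw [hpoly, hpoly]
  nth_rw 1 [hp]
  simp
end

section
/- Let d ≥ 0 and let f : ℤ → ℚ be a function given by a polynomial of degree at most d. Define D(X) = (1−X)^{d+1} · Σ_{m≥0} f(m) X^m in ℚ[[X]]; then D is a polynomial of degree at most d, and in ℚ[[X]] one has the identity (1−X)^{d+1} · Σ_{m≥1} f(−m) X^m = (−1)^d · X · D*(X), where D*(X) = X^d · D(1/X) is the reversed polynomial with coefficients D*_i = D_{d−i}. -/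
/-!
A polynomial of degree at most `d` is killed by the `(d+1)`-st forward difference: for every
integer `y`, `∑ j ≤ d+1, (-1)^j C(d+1, j) f(y + j) = 0`. Since `(-1)^j C(d+1, j)` are the
coefficients of `(1 - X)^(d+1)`, the `n`-th coefficient of `(1 - X)^(d+1) ∑ f(m) X^m` is a
truncation of such a vanishing sum, and it is the whole sum once `n > d`. On the negative side the
`(m+1)`-st coefficient is the complementary piece of the sum at `y = -(m+1)`, and the symmetry
`C(d+1, j) = C(d+1, d+1-j)` reflects that piece onto `(-1)^d` times the coefficient `D_(d-m)`.
-/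

open Finset PowerSeries fwdDiff
open scoped Polynomial

theorem neg_one_pow_sub_of_le {R : Type*} [Monoid R] [HasDistribNeg R] {e j : ℕ} (h : j ≤ e) :
    (-1 : R) ^ (e - j) = (-1) ^ e * (-1) ^ j := by
  obtain ⟨k, rfl⟩ := Nat.exists_eq_add_of_le h
  rw [Nat.add_sub_cancel_left, ← pow_add, show j + k + j = k + 2 * j by omega, pow_add, pow_mul,
    neg_one_sq, one_pow, mul_one]

section
variable {R : Type*} [CommRing R]

theorem neg_one_pow_sub_mul_choose_sub {e j : ℕ} (h : j ≤ e) :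
    (-1 : R) ^ (e - j) * e.choose (e - j) = (-1) ^ e * ((-1) ^ j * e.choose j) := by
  rw [neg_one_pow_sub_of_le h, Nat.choose_symm h, mul_assoc]

theorem sum_range_neg_one_pow_mul_choose_of_le (g : ℕ → R) {e n : ℕ} (h : e ≤ n) :
    ∑ j ∈ range (n + 1), (-1) ^ j * e.choose j * g j =
      ∑ j ∈ range (e + 1), (-1) ^ j * e.choose j * g j := by
  refine (sum_subset (range_subset_range.2 (by omega)) fun j _ hj => ?_).symm
  rw [Nat.choose_eq_zero_of_lt (by simpa using hj), Nat.cast_zero, mul_zero, zero_mul]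

theorem PowerSeries.coeff_one_sub_X_pow (e n : ℕ) :
    coeff n ((1 - X : R⟦X⟧) ^ e) = (-1) ^ n * e.choose n := by
  have : (1 - X : R⟦X⟧) ^ e = rescale (-1) (((1 + Polynomial.X) ^ e : R[X]) : R⟦X⟧) := by
    simp [sub_eq_add_neg]
  rw [this, coeff_rescale, Polynomial.coeff_coe, Polynomial.coeff_one_add_X_pow]

theorem PowerSeries.coeff_one_sub_X_pow_mul_mk (e n : ℕ) (g : ℕ → R) :
    coeff n ((1 - X : R⟦X⟧) ^ e * mk g) =
      ∑ j ∈ range (n + 1), (-1) ^ j * e.choose j * g (n - j) := by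
  rw [coeff_mul, Nat.sum_antidiagonal_eq_sum_range_succ_mk]
  simp only [coeff_one_sub_X_pow, coeff_mk]

theorem fwdDiff_iter_eq_neg_one_pow_mul_sum (f : ℤ → R) (e : ℕ) (y : ℤ) :
    (Δ_[1])^[e] f y = (-1) ^ e * ∑ j ∈ range (e + 1), (-1) ^ j * e.choose j * f (y + j) := by
  rw [fwdDiff_iter_eq_sum_shift, mul_sum]
  refine sum_congr rfl fun j hj => ?_
  rw [neg_one_pow_sub_of_le (by simpa [Nat.lt_succ_iff] using hj)]
  simp only [Int.nsmul_eq_mul, mul_one, zsmul_eq_mul, Int.cast_mul, Int.cast_pow, Int.cast_neg,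
    Int.cast_one, Int.cast_natCast]
  ring

theorem sum_neg_one_pow_mul_choose_mul_add_eq_zero {f : ℤ → R} {e : ℕ}
    (hf : (Δ_[1])^[e] f = 0) (y : ℤ) :
    ∑ j ∈ range (e + 1), (-1) ^ j * e.choose j * f (y + j) = 0 := by
  have h := congrFun hf y
  rw [fwdDiff_iter_eq_neg_one_pow_mul_sum, Pi.zero_apply] at h
  exact ((isUnit_neg_one.pow e).mul_right_eq_zero).1 h

theorem sum_neg_one_pow_mul_choose_mul_sub_eq_zero {f : ℤ → R} {e : ℕ}
    (hf : (Δ_[1])^[e] f = 0) (y : ℤ) :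
    ∑ j ∈ range (e + 1), (-1) ^ j * e.choose j * f (y - j) = 0 := by
  have h := sum_neg_one_pow_mul_choose_mul_add_eq_zero hf (y - e)
  rw [← sum_range_reflect] at h
  rw [← (isUnit_neg_one.pow e).mul_right_eq_zero, ← h, mul_sum]
  refine sum_congr rfl fun j hj => ?_
  have hj : j ≤ e := Nat.lt_succ_iff.1 (mem_range.1 hj)
  rw [Nat.add_sub_cancel, neg_one_pow_sub_mul_choose_sub hj,
    show y - e + ((e - j : ℕ) : ℤ) = y - j by omega]
  ring

theorem PowerSeries.coeff_one_sub_X_pow_mul_mk_natCast (f : ℤ → R) (e n : ℕ) :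
    coeff n ((1 - X : R⟦X⟧) ^ e * mk fun m : ℕ => f m) =
      ∑ j ∈ range (n + 1), (-1) ^ j * e.choose j * f (n - j) := by
  rw [coeff_one_sub_X_pow_mul_mk]
  refine sum_congr rfl fun j hj => ?_
  rw [Nat.cast_sub (Nat.lt_succ_iff.1 (mem_range.1 hj))]

theorem PowerSeries.coeff_succ_one_sub_X_pow_mul_mk_neg (f : ℤ → R) (e m : ℕ) :
    coeff (m + 1) ((1 - X : R⟦X⟧) ^ e * mk fun k : ℕ => if k = 0 then 0 else f (-k)) =
      ∑ j ∈ range (m + 1), (-1) ^ j * e.choose j * f (-(m + 1) + j) := by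
  rw [coeff_one_sub_X_pow_mul_mk, sum_range_succ, Nat.sub_self, if_pos rfl, mul_zero, add_zero]
  refine sum_congr rfl fun j hj => ?_
  have hj : j ≤ m := Nat.lt_succ_iff.1 (mem_range.1 hj)
  rw [if_neg (by omega)]
  congr 2
  omega

theorem PowerSeries.coeff_one_sub_X_pow_mul_mk_natCast_eq_zero {f : ℤ → R} {e n : ℕ}
    (hf : (Δ_[1])^[e] f = 0) (h : e ≤ n) :
    coeff n ((1 - X : R⟦X⟧) ^ e * mk fun m : ℕ => f m) = 0 := by
  rw [coeff_one_sub_X_pow_mul_mk_natCast, sum_range_neg_one_pow_mul_choose_of_le _ h]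
  exact sum_neg_one_pow_mul_choose_mul_sub_eq_zero hf n

theorem PowerSeries.coeff_succ_one_sub_X_pow_mul_mk_neg_eq_zero {f : ℤ → R} {e m : ℕ}
    (hf : (Δ_[1])^[e] f = 0) (h : e ≤ m) :
    coeff (m + 1) ((1 - X : R⟦X⟧) ^ e * mk fun k : ℕ => if k = 0 then 0 else f (-k)) = 0 := by
  rw [coeff_succ_one_sub_X_pow_mul_mk_neg,
    sum_range_neg_one_pow_mul_choose_of_le (fun j => f (-(m + 1) + j)) h]
  exact sum_neg_one_pow_mul_choose_mul_add_eq_zero hf _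

theorem PowerSeries.coeff_succ_one_sub_X_pow_mul_mk_neg_of_le {f : ℤ → R} {d m : ℕ}
    (hf : (Δ_[1])^[d + 1] f = 0) (h : m ≤ d) :
    coeff (m + 1) ((1 - X : R⟦X⟧) ^ (d + 1) * mk fun k : ℕ => if k = 0 then 0 else f (-k)) =
      (-1) ^ d * coeff (d - m) ((1 - X : R⟦X⟧) ^ (d + 1) * mk fun k : ℕ => f k) := by
  have hsum := sum_neg_one_pow_mul_choose_mul_add_eq_zero hf (-(m + 1))
  rw [show d + 1 + 1 = m + 1 + (d - m + 1) by omega, sum_range_add] at hsum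
  have htail : ∑ k ∈ range (d - m + 1), (-1) ^ (m + 1 + k) * (d + 1).choose (m + 1 + k) *
        f (-(m + 1) + (m + 1 + k : ℕ)) =
      (-1) ^ (d + 1) *
        ∑ k ∈ range (d - m + 1), (-1) ^ k * (d + 1).choose k * f ((d - m : ℕ) - k) := by
    rw [← sum_range_reflect, mul_sum]
    refine sum_congr rfl fun k hk => ?_
    have hk : k ≤ d - m := Nat.lt_succ_iff.1 (mem_range.1 hk)
    rw [show m + 1 + (d - m + 1 - 1 - k) = d + 1 - k by omega,
      neg_one_pow_sub_mul_choose_sub (by omega), mul_assoc]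
    congr 3
    omega
  rw [coeff_succ_one_sub_X_pow_mul_mk_neg, coeff_one_sub_X_pow_mul_mk_natCast]
  linear_combination hsum - htail

theorem PowerSeries.one_sub_X_pow_mul_mk_neg_eq_X_mul_reverse {f : ℤ → R} {d : ℕ}
    (hf : (Δ_[1])^[d + 1] f = 0) :
    (1 - X : R⟦X⟧) ^ (d + 1) * mk (fun k : ℕ => if k = 0 then 0 else f (-k)) =
      C ((-1) ^ d) * X * mk fun i : ℕ =>
        if i ≤ d then coeff (d - i) ((1 - X : R⟦X⟧) ^ (d + 1) * mk fun k : ℕ => f k) else 0 := by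
  ext (_ | m)
  · simp [coeff_one_sub_X_pow_mul_mk]
  · rw [mul_assoc, coeff_C_mul, coeff_succ_X_mul, coeff_mk]
    split_ifs with h
    · exact coeff_succ_one_sub_X_pow_mul_mk_neg_of_le hf h
    · rw [mul_zero]
      exact coeff_succ_one_sub_X_pow_mul_mk_neg_eq_zero hf (by omega)

end

theorem fwdDiff_iter_comp_intCast {R G : Type*} [AddCommGroupWithOne R] [AddCommGroup G]
    (g : R → G) (n : ℕ) :
    (Δ_[1])^[n] (g ∘ Int.cast) = ((Δ_[1])^[n] g) ∘ (Int.cast : ℤ → R) :=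
  (Function.Semiconj.iterate_right (f := (· ∘ (Int.cast : ℤ → R)))
    (fun g => funext fun m => by simp [fwdDiff]) n g).symm

/-- For a polynomial function `f : ℤ → ℚ` of degree at most `d`, the series
`D = (1-X)^(d+1) * Σ_{m≥0} f(m) X^m` is a polynomial of degree at most `d`, and
`(1-X)^(d+1) * Σ_{m≥1} f(-m) X^m = (-1)^d * X * D*`, where `D*` is the reversal of `D`,
with coefficients `D*_i = D_{d-i}` for `i ≤ d` (and `0` for `i > d`). -/
theorem stmt_4 (d : ℕ) (f : ℤ → ℚ) (p : Polynomial ℚ)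
    (hdeg : p.natDegree ≤ d) (hf : ∀ m : ℤ, f m = p.eval (m : ℚ)) :
    (∀ i : ℕ, d < i →
      PowerSeries.coeff i
        ((1 - PowerSeries.X) ^ (d + 1) * PowerSeries.mk fun m : ℕ => f (m : ℤ)) = 0) ∧
    (1 - PowerSeries.X) ^ (d + 1) *
        PowerSeries.mk (fun m : ℕ => if m = 0 then 0 else f (-(m : ℤ))) =
      PowerSeries.C ((-1 : ℚ) ^ d) * PowerSeries.X *
        PowerSeries.mk (fun i : ℕ =>
          if i ≤ d then
            PowerSeries.coeff (d - i)
              ((1 - PowerSeries.X) ^ (d + 1) * PowerSeries.mk fun m : ℕ => f (m : ℤ))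
          else 0) := by
  have hΔ : (Δ_[1])^[d + 1] f = 0 := by
    rw [show f = p.eval ∘ Int.cast from funext hf, fwdDiff_iter_comp_intCast,
      Polynomial.fwdDiff_iter_eq_zero_of_degree_lt (by omega)]
    rfl
  exact ⟨fun i hi => coeff_one_sub_X_pow_mul_mk_natCast_eq_zero hΔ hi,
    one_sub_X_pow_mul_mk_neg_eq_X_mul_reverse hΔ⟩
end
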